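/- arXiv:1310.2752 — 4 statements merged into one kernel-verified Lean document; each statement's English description precedes it below -/
import Mathlib

section
/- For every σ ∈ (−1/2, 0), every μ ≥ 0, every integer k ≥ 1, and all A, B ∈ ℝ^k such that A and B are not both zero when μ = 0, one has ∫₀¹ (μ² + |A + sB|²)^σ ds ≤ (24/(2σ + 1)) · (μ² + |A|² + |B|²)^σ. -/
/-!
Write `‖A + s • B‖² = ‖A + s₀ • B‖² + (s - s₀)² ‖B‖²`, where `A + s₀ • B` is the point of the line
closest to `0`. Clamping `s₀` to `t ∈ [-2, 2]`, the base `μ² + ‖A + s • B‖²` dominates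
`c (s - t)² / 9` for `s ∈ [0, 1]`, where `c = μ² + ‖A‖² + ‖B‖²`. As `σ < 0`, the integrand is then
at most `(c / 9)^σ |s - t|^(2σ)`, and `2σ > -1` makes this integrable, with integral over `[0, 1]`
at most `(c / 9)^σ · 2 · 3^(2σ + 1) / (2σ + 1) = 6 c^σ / (2σ + 1)`.
-/

open MeasureTheory Set

lemma intervalIntegrable_abs_rpow {r : ℝ} (hr : -1 < r) (a b : ℝ) :
    IntervalIntegrable (fun x : ℝ => |x| ^ r) volume a b := by
  have from_zero_of_nonneg : ∀ c : ℝ, 0 ≤ c →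
      IntervalIntegrable (fun x : ℝ => |x| ^ r) volume 0 c := by
    intro c hc
    refine (intervalIntegral.intervalIntegrable_rpow' hr).congr fun x hx => ?_
    rw [uIoc_of_le hc] at hx
    rw [abs_of_pos hx.1]
  have from_zero : ∀ c : ℝ, IntervalIntegrable (fun x : ℝ => |x| ^ r) volume 0 c := by
    intro c
    rcases le_total 0 c with hc | hc
    · exact from_zero_of_nonneg c hc
    · rw [IntervalIntegrable.iff_comp_neg]
      simpa only [abs_neg, neg_zero] using from_zero_of_nonneg (-c) (by linarith)
  exact (from_zero a).symm.trans (from_zero b)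

lemma integral_abs_rpow_symm {r : ℝ} (hr : -1 < r) {R : ℝ} (hR : 0 ≤ R) :
    ∫ x in -R..R, |x| ^ r = 2 * R ^ (r + 1) / (r + 1) := by
  have half : ∫ x in (0 : ℝ)..R, |x| ^ r = R ^ (r + 1) / (r + 1) := by
    have habs : EqOn (fun x : ℝ => |x| ^ r) (fun x => x ^ r) (uIcc 0 R) := fun x hx => by
      rw [uIcc_of_le hR] at hx
      simp only [abs_of_nonneg hx.1]
    rw [intervalIntegral.integral_congr habs, integral_rpow (Or.inl hr),
      Real.zero_rpow (by linarith), sub_zero]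
  have mirror : ∫ x in -R..0, |x| ^ r = ∫ x in (0 : ℝ)..R, |x| ^ r := by
    simpa only [abs_neg, neg_zero] using
      (intervalIntegral.integral_comp_neg (a := 0) (b := R) fun x => |x| ^ r).symm
  rw [← intervalIntegral.integral_add_adjacent_intervals (intervalIntegrable_abs_rpow hr _ 0)
    (intervalIntegrable_abs_rpow hr 0 _), mirror, half]
  ring

lemma integral_abs_sub_rpow_le {r : ℝ} (hr : -1 < r) {a b t R : ℝ} (hab : a ≤ b)
    (ha : t - R ≤ a) (hb : b ≤ t + R) :
    ∫ x in a..b, |x - t| ^ r ≤ 2 * R ^ (r + 1) / (r + 1) := by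
  rw [intervalIntegral.integral_comp_sub_right (fun x => |x| ^ r),
    ← integral_abs_rpow_symm hr (by linarith : 0 ≤ R)]
  exact intervalIntegral.integral_mono_interval (by linarith) (by linarith) (by linarith)
    (Filter.Eventually.of_forall fun x => by positivity) (intervalIntegrable_abs_rpow hr _ _)

lemma rpow_le_mul_abs_sub_rpow {x c s t σ : ℝ} (hc : 0 < c) (hst : s ≠ t) (hσ : σ ≤ 0)
    (hx : c * (s - t) ^ 2 ≤ x) : x ^ σ ≤ c ^ σ * |s - t| ^ (2 * σ) := by
  have hpos : 0 < c * (s - t) ^ 2 := by have := sub_ne_zero.mpr hst; positivity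
  calc x ^ σ ≤ (c * (s - t) ^ 2) ^ σ := Real.rpow_le_rpow_of_nonpos hpos hx hσ
    _ = c ^ σ * |s - t| ^ (2 * σ) := by
      rw [Real.mul_rpow hc.le (sq_nonneg _), ← sq_abs, Real.rpow_mul (abs_nonneg _),
        Real.rpow_two]

lemma integral_rpow_le_of_mul_sq_sub_le {f : ℝ → ℝ} {a b c t σ : ℝ} (hab : a ≤ b) (hc : 0 < c)
    (hσ₁ : -1 < 2 * σ) (hσ₂ : σ ≤ 0) (hf : ∀ s ∈ Icc a b, c * (s - t) ^ 2 ≤ f s) :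
    ∫ s in a..b, f s ^ σ ≤ c ^ σ * ∫ s in a..b, |s - t| ^ (2 * σ) := by
  rw [← intervalIntegral.integral_const_mul, intervalIntegral.integral_of_le hab,
    intervalIntegral.integral_of_le hab]
  have hne : ∀ᵐ s ∂volume.restrict (Ioc a b), s ≠ t :=
    ae_restrict_of_ae (Measure.ae_ne volume t)
  have hmem : ∀ᵐ s ∂volume.restrict (Ioc a b), s ∈ Icc a b :=
    ae_restrict_of_forall_mem measurableSet_Ioc fun s hs => Ioc_subset_Icc_self hs
  refine integral_mono_of_nonneg ?_ ?_ ?_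
  · filter_upwards [hmem] with s hs
    exact Real.rpow_nonneg ((by positivity : 0 ≤ c * (s - t) ^ 2).trans (hf s hs)) σ
  · have hg := (intervalIntegrable_abs_rpow hσ₁ (a - t) (b - t)).comp_sub_right t
    simp only [sub_add_cancel] at hg
    exact ((intervalIntegrable_iff_integrableOn_Ioc_of_le hab).mp hg).const_mul _
  · filter_upwards [hne, hmem] with s hst hs
    exact rpow_le_mul_abs_sub_rpow hc hst hσ₂ (hf s hs)

lemma exists_forall_norm_add_smul_sq {E : Type*} [NormedAddCommGroup E] [InnerProductSpace ℝ E]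
    (A B : E) : ∃ s₀ : ℝ, ∀ s : ℝ,
      ‖A + s • B‖ ^ 2 = ‖A + s₀ • B‖ ^ 2 + (s - s₀) ^ 2 * ‖B‖ ^ 2 := by
  refine ⟨-inner ℝ A B / ‖B‖ ^ 2, fun s => ?_⟩
  set s₀ := -inner ℝ A B / ‖B‖ ^ 2
  have horth : inner ℝ (A + s₀ • B) ((s - s₀) • B) = 0 := by
    rcases eq_or_ne B 0 with rfl | hB
    · simp
    · have hs₀ : s₀ * ‖B‖ ^ 2 = -inner ℝ A B := div_mul_cancel₀ _ (by positivity)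
      rw [inner_smul_right, inner_add_left, real_inner_smul_left, real_inner_self_eq_norm_sq,
        hs₀, add_neg_cancel, mul_zero]
  rw [show A + s • B = (A + s₀ • B) + (s - s₀) • B by rw [sub_smul]; abel,
    norm_add_sq_real, horth, norm_smul, mul_pow, Real.norm_eq_abs, sq_abs]
  ring

lemma exists_mem_Icc_forall_one_add_sq_mul_sq_sub_le (s₀ : ℝ) :
    ∃ t ∈ Icc (-2 : ℝ) 2, ∀ s ∈ Icc (0 : ℝ) 1, (1 + s₀ ^ 2) * (s - t) ^ 2 ≤ 9 * (s - s₀) ^ 2 := by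
  rcases le_or_gt s₀ (-2) with h | h
  · refine ⟨-2, by norm_num, fun s ⟨hs₀, hs₁⟩ => ?_⟩
    nlinarith [mul_nonneg hs₀ (sub_nonneg.mpr hs₁),
      mul_nonneg (sub_nonneg.mpr hs₁) (by linarith : 0 ≤ -2 - s₀)]
  rcases le_or_gt s₀ 2 with h' | h'
  · refine ⟨s₀, ⟨h.le, h'⟩, fun s _ => ?_⟩
    have : s₀ ^ 2 ≤ 4 := by nlinarith
    nlinarith [mul_le_mul_of_nonneg_right this (sq_nonneg (s - s₀))]
  · refine ⟨2, by norm_num, fun s ⟨hs₀, hs₁⟩ => ?_⟩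
    nlinarith [mul_nonneg hs₀ (sub_nonneg.mpr hs₁), mul_nonneg hs₀ (by linarith : 0 ≤ s₀ - 2)]

theorem integral_rpow_add_smul_le_general (k : ℕ) (σ μ : ℝ)
    (hσ₁ : -(1 / 2) < σ) (hσ₂ : σ < 0)
    (A B : EuclideanSpace ℝ (Fin k)) (hAB : μ = 0 → ¬(A = 0 ∧ B = 0)) :
    (∫ s in (0:ℝ)..1, (μ ^ 2 + ‖A + s • B‖ ^ 2) ^ σ)
      ≤ (24 / (2 * σ + 1)) * (μ ^ 2 + ‖A‖ ^ 2 + ‖B‖ ^ 2) ^ σ := by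
  set c := μ ^ 2 + ‖A‖ ^ 2 + ‖B‖ ^ 2
  have hc : 0 < c := by
    by_cases hμ : μ = 0
    · rcases not_and_or.mp (hAB hμ) with hA | hB
      · have := norm_pos_iff.mpr hA; positivity
      · have := norm_pos_iff.mpr hB; positivity
    · positivity
  obtain ⟨s₀, hs₀⟩ := exists_forall_norm_add_smul_sq A B
  obtain ⟨t, ⟨ht₁, ht₂⟩, hst⟩ := exists_mem_Icc_forall_one_add_sq_mul_sq_sub_le s₀
  have hlower : ∀ s ∈ Icc (0 : ℝ) 1, c / 9 * (s - t) ^ 2 ≤ μ ^ 2 + ‖A + s • B‖ ^ 2 := by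
    intro s hs
    have hP : (μ ^ 2 + ‖A + s₀ • B‖ ^ 2) * (s - t) ^ 2 ≤ (μ ^ 2 + ‖A + s₀ • B‖ ^ 2) * 9 :=
      mul_le_mul_of_nonneg_left (by nlinarith [hs.1, hs.2]) (by positivity)
    have hB := mul_le_mul_of_nonneg_left (hst s hs) (sq_nonneg ‖B‖)
    have hnormA := hs₀ 0
    rw [zero_smul, add_zero, zero_sub, neg_sq] at hnormA
    rw [hs₀ s]
    simp only [c, hnormA]
    linarith
  have h2σ : 0 < 2 * σ + 1 := by linarith
  calc (∫ s in (0:ℝ)..1, (μ ^ 2 + ‖A + s • B‖ ^ 2) ^ σ)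
      ≤ (c / 9) ^ σ * ∫ s in (0:ℝ)..1, |s - t| ^ (2 * σ) :=
        integral_rpow_le_of_mul_sq_sub_le zero_le_one (by positivity) (by linarith) hσ₂.le hlower
    _ ≤ (c / 9) ^ σ * (2 * 3 ^ (2 * σ + 1) / (2 * σ + 1)) := by
        gcongr
        exact integral_abs_sub_rpow_le (by linarith) zero_le_one (by linarith) (by linarith)
    _ = 6 / (2 * σ + 1) * c ^ σ := by
        rw [Real.div_rpow hc.le (by norm_num), Real.rpow_add_one (by norm_num),
          show (9 : ℝ) = 3 ^ (2 : ℝ) by norm_num, ← Real.rpow_mul (by norm_num)]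
        field_simp
        ring
    _ ≤ 24 / (2 * σ + 1) * c ^ σ := by gcongr; norm_num

/-- For every `σ ∈ (−1/2, 0)`, every `μ ≥ 0`, every integer `k ≥ 1`, and all
`A, B ∈ ℝ^k` such that `A` and `B` are not both zero when `μ = 0`, one has
`∫₀¹ (μ² + |A + sB|²)^σ ds ≤ (24/(2σ + 1)) · (μ² + |A|² + |B|²)^σ`. -/
theorem integral_rpow_add_smul_le (k : ℕ) (hk : 1 ≤ k) (σ μ : ℝ)
    (hσ₁ : -(1 / 2) < σ) (hσ₂ : σ < 0) (hμ : 0 ≤ μ)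
    (A B : EuclideanSpace ℝ (Fin k)) (hAB : μ = 0 → ¬(A = 0 ∧ B = 0)) :
    (∫ s in (0:ℝ)..1, (μ ^ 2 + ‖A + s • B‖ ^ 2) ^ σ)
      ≤ (24 / (2 * σ + 1)) * (μ ^ 2 + ‖A‖ ^ 2 + ‖B‖ ^ 2) ^ σ :=
  integral_rpow_add_smul_le_general k σ μ hσ₁ hσ₂ A B hAB
end

section
/- Let 1 < p < ∞ and let k ≥ 1 be an integer. There exists a constant c = c(k, p) > 0 such that for all μ ∈ [0,1] and all A, B, C ∈ ℝ^k, not all of μ, A, B, C equal to zero, one has (μ² + |A|² + |C|²)^{(p−2)/2} |A − C|² ≤ c (μ² + |A|² + |B|²)^{(p−2)/2} |A − B|² + c (μ² + |B|² + |C|²)^{(p−2)/2} |B − C|². -/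
/-!
With `q = (p - 2)/2` the claim is a quasi-triangle inequality for
`W(X, Y) = (μ² + |X|² + |Y|²)^q |X - Y|²`.
For `q ≥ 0`, if `|B - C| ≤ |A - B|` then `|A - C| ≤ 2|A - B|` and the weight of `(A, C)` is at most
`6^q` times that of `(A, B)`. For `q < 0` the weight is decreasing, so only a large `|B|` can hurt:
if `|B|² ≤ 4(μ² + |A|² + |C|²)` the three weights are comparable, and otherwise `|B| ≤ 2|A - B|`,
so the weight of `(A, B)` is controlled by `|A - B|²` and `t ↦ t^q · t` is increasing.
-/

open Real

noncomputable def weightedSqDist {E : Type*} [SeminormedAddCommGroup E] (μ q : ℝ) (X Y : E) : ℝ :=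
  (μ ^ 2 + ‖X‖ ^ 2 + ‖Y‖ ^ 2) ^ q * ‖X - Y‖ ^ 2

lemma Real.rpow_le_rpow_mul_of_le_mul {s t q K : ℝ} (hq : q ≤ 0) (hK : 0 < K) (ht : 0 < t)
    (hts : t ≤ K * s) : s ^ q ≤ K ^ (-q) * t ^ q := by
  have hs : 0 ≤ s := nonneg_of_mul_nonneg_right (ht.le.trans hts) hK
  have h : K ^ q * s ^ q ≤ t ^ q := mul_rpow hK.le hs ▸ rpow_le_rpow_of_nonpos ht hts hq
  calc s ^ q = K ^ (-q) * (K ^ q * s ^ q) := by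
        rw [← mul_assoc, ← rpow_add hK, neg_add_cancel, rpow_zero, one_mul]
    _ ≤ K ^ (-q) * t ^ q := by gcongr

lemma Real.rpow_mul_self_le_rpow_mul_self {s t q : ℝ} (hq : -1 ≤ q) (hs : 0 < s) (hst : s ≤ t) :
    s ^ q * s ≤ t ^ q * t := by
  rw [← rpow_add_one hs.ne', ← rpow_add_one (hs.trans_le hst).ne']
  exact rpow_le_rpow hs.le hst (by linarith)

section weightedSqDist

variable {E : Type*} [SeminormedAddCommGroup E] {μ q : ℝ}

lemma weightedSqDist_nonneg (X Y : E) : 0 ≤ weightedSqDist μ q X Y := by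
  unfold weightedSqDist; positivity

lemma weightedSqDist_comm (X Y : E) : weightedSqDist μ q X Y = weightedSqDist μ q Y X := by
  simp only [weightedSqDist, add_right_comm _ (‖X‖ ^ 2), norm_sub_rev X]

lemma weightedSqDist_le_of_nonneg {A B C : E} (hq : 0 ≤ q) (hBC : ‖B - C‖ ≤ ‖A - B‖) :
    weightedSqDist μ q A C ≤ 4 * 6 ^ q * weightedSqDist μ q A B := by
  have hd : ‖A - C‖ ≤ 2 * ‖A - B‖ := by
    linarith [norm_sub_le_norm_sub_add_norm_sub A B C]
  have hC : ‖C‖ ≤ ‖A‖ + 2 * ‖B‖ := by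
    linarith [norm_le_norm_add_norm_sub B C, norm_sub_le A B]
  have hs : μ ^ 2 + ‖A‖ ^ 2 + ‖C‖ ^ 2 ≤ 6 * (μ ^ 2 + ‖A‖ ^ 2 + ‖B‖ ^ 2) := by
    have := pow_le_pow_left₀ (norm_nonneg C) hC 2
    nlinarith [sq_nonneg (2 * ‖A‖ - ‖B‖), sq_nonneg μ]
  have hw : (μ ^ 2 + ‖A‖ ^ 2 + ‖C‖ ^ 2) ^ q ≤ 6 ^ q * (μ ^ 2 + ‖A‖ ^ 2 + ‖B‖ ^ 2) ^ q := by
    rw [← mul_rpow (by norm_num) (by positivity)]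
    exact rpow_le_rpow (by positivity) hs hq
  have hd2 : ‖A - C‖ ^ 2 ≤ 4 * ‖A - B‖ ^ 2 := by
    nlinarith [pow_le_pow_left₀ (norm_nonneg _) hd 2]
  calc weightedSqDist μ q A C
      ≤ 6 ^ q * (μ ^ 2 + ‖A‖ ^ 2 + ‖B‖ ^ 2) ^ q * (4 * ‖A - B‖ ^ 2) := by
        unfold weightedSqDist; gcongr
    _ = 4 * 6 ^ q * weightedSqDist μ q A B := by unfold weightedSqDist; ring

lemma rpow_mul_norm_sub_sq_le_weightedSqDist {X Y : E} {s K : ℝ} (hq : q ≤ 0) (hK : 0 < K)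
    (h : μ ^ 2 + ‖X‖ ^ 2 + ‖Y‖ ^ 2 ≤ K * s) :
    s ^ q * ‖X - Y‖ ^ 2 ≤ K ^ (-q) * weightedSqDist μ q X Y := by
  rcases (norm_nonneg (X - Y)).eq_or_lt with hXY | hXY
  · rw [← hXY, weightedSqDist, ← hXY]; simp
  have ht : 0 < μ ^ 2 + ‖X‖ ^ 2 + ‖Y‖ ^ 2 := by
    nlinarith [norm_sub_le X Y, add_sq_le (a := ‖X‖) (b := ‖Y‖), sq_nonneg μ]
  rw [weightedSqDist, ← mul_assoc]
  gcongr
  exact rpow_le_rpow_mul_of_le_mul hq hK ht h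

lemma weightedSqDist_le_of_nonpos {A B C : E} (hq : q ≤ 0)
    (hB : ‖B‖ ^ 2 ≤ 4 * (μ ^ 2 + ‖A‖ ^ 2 + ‖C‖ ^ 2)) :
    weightedSqDist μ q A C
      ≤ 2 * 5 ^ (-q) * (weightedSqDist μ q A B + weightedSqDist μ q B C) := by
  set s := μ ^ 2 + ‖A‖ ^ 2 + ‖C‖ ^ 2 with hs
  have hd : ‖A - C‖ ^ 2 ≤ 2 * (‖A - B‖ ^ 2 + ‖B - C‖ ^ 2) :=
    (pow_le_pow_left₀ (norm_nonneg _) (norm_sub_le_norm_sub_add_norm_sub A B C) 2).trans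
      add_sq_le
  have hAB := rpow_mul_norm_sub_sq_le_weightedSqDist (μ := μ) (s := s) (X := A) (Y := B) hq
    (by norm_num : (0 : ℝ) < 5) (by linarith [sq_nonneg ‖C‖])
  have hBC := rpow_mul_norm_sub_sq_le_weightedSqDist (μ := μ) (s := s) (X := B) (Y := C) hq
    (by norm_num : (0 : ℝ) < 5) (by linarith [sq_nonneg μ, sq_nonneg ‖A‖])
  calc weightedSqDist μ q A C ≤ s ^ q * (2 * (‖A - B‖ ^ 2 + ‖B - C‖ ^ 2)) := by
        unfold weightedSqDist; gcongr
    _ ≤ 2 * 5 ^ (-q) * (weightedSqDist μ q A B + weightedSqDist μ q B C) := by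
        linarith

lemma weightedSqDist_le_of_lt {A B C : E} (hq : -1 ≤ q)
    (hB : 4 * (μ ^ 2 + ‖A‖ ^ 2 + ‖C‖ ^ 2) < ‖B‖ ^ 2) :
    weightedSqDist μ q A C ≤ 10 * weightedSqDist μ q A B := by
  set s := μ ^ 2 + ‖A‖ ^ 2 + ‖C‖ ^ 2
  set t := μ ^ 2 + ‖A‖ ^ 2 + ‖B‖ ^ 2
  have hA : 2 * ‖A‖ < ‖B‖ := by
    refine (pow_lt_pow_iff_left₀ (by positivity) (norm_nonneg B) two_ne_zero).1 ?_
    nlinarith [sq_nonneg μ, sq_nonneg ‖C‖]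
  have hBA : ‖B‖ ≤ 2 * ‖A - B‖ := by linarith [norm_le_norm_add_norm_sub A B]
  have ht : t ≤ 5 * ‖A - B‖ ^ 2 := by
    nlinarith [pow_le_pow_left₀ (norm_nonneg B) hBA 2, sq_nonneg ‖C‖]
  have hst : s ≤ t := by nlinarith [sq_nonneg μ, sq_nonneg ‖A‖]
  have hd : ‖A - C‖ ^ 2 ≤ 2 * s := by
    nlinarith [pow_le_pow_left₀ (norm_nonneg _) (norm_sub_le A C) 2,
      add_sq_le (a := ‖A‖) (b := ‖C‖), sq_nonneg μ]
  rcases (sq_nonneg ‖A - C‖).eq_or_lt with hAC | hAC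
  · rw [weightedSqDist, ← hAC, mul_zero]
    exact mul_nonneg (by norm_num) (weightedSqDist_nonneg A B)
  calc weightedSqDist μ q A C ≤ 2 * (s ^ q * s) := by
        rw [weightedSqDist]
        nlinarith [rpow_nonneg (show 0 ≤ s by positivity) q]
    _ ≤ 2 * (t ^ q * t) := by
        gcongr 2 * ?_
        exact rpow_mul_self_le_rpow_mul_self hq (by linarith) hst
    _ ≤ 2 * (t ^ q * (5 * ‖A - B‖ ^ 2)) := by gcongr
    _ = 10 * weightedSqDist μ q A B := by rw [weightedSqDist]; ring

theorem weightedSqDist_le_mul_add (hq : -1 ≤ q) (A B C : E) :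
    weightedSqDist μ q A C
      ≤ (10 + 4 * 6 ^ q) * (weightedSqDist μ q A B + weightedSqDist μ q B C) := by
  have hAB := weightedSqDist_nonneg (μ := μ) (q := q) A B
  have hBC := weightedSqDist_nonneg (μ := μ) (q := q) B C
  have h6 : 0 ≤ (6 : ℝ) ^ q := by positivity
  rcases le_total 0 q with hq0 | hq0
  · rcases le_total ‖B - C‖ ‖A - B‖ with h | h
    · nlinarith [weightedSqDist_le_of_nonneg (μ := μ) hq0 h]
    · have := weightedSqDist_le_of_nonneg (μ := μ) hq0
        (by rwa [norm_sub_rev B A, norm_sub_rev C B] : ‖B - A‖ ≤ ‖C - B‖)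
      rw [weightedSqDist_comm C A, weightedSqDist_comm C B] at this
      nlinarith
  · rcases le_or_gt (‖B‖ ^ 2) (4 * (μ ^ 2 + ‖A‖ ^ 2 + ‖C‖ ^ 2)) with hB | hB
    · have h5 : (5 : ℝ) ^ (-q) ≤ 5 := by
        simpa using rpow_le_rpow_of_exponent_le (by norm_num : (1 : ℝ) ≤ 5)
          (by linarith : -q ≤ 1)
      nlinarith [weightedSqDist_le_of_nonpos hq0 hB]
    · nlinarith [weightedSqDist_le_of_lt hq hB]

end weightedSqDist

theorem rpow_estimate_V_ii_general (k : ℕ) (p : ℝ) (hp : 1 < p) :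
    ∃ c : ℝ, 0 < c ∧ ∀ μ : ℝ, 0 ≤ μ → μ ≤ 1 →
      ∀ A B C : EuclideanSpace ℝ (Fin k), ¬(μ = 0 ∧ A = 0 ∧ B = 0 ∧ C = 0) →
        (μ ^ 2 + ‖A‖ ^ 2 + ‖C‖ ^ 2) ^ ((p - 2) / 2) * ‖A - C‖ ^ 2
          ≤ c * ((μ ^ 2 + ‖A‖ ^ 2 + ‖B‖ ^ 2) ^ ((p - 2) / 2) * ‖A - B‖ ^ 2)
            + c * ((μ ^ 2 + ‖B‖ ^ 2 + ‖C‖ ^ 2) ^ ((p - 2) / 2) * ‖B - C‖ ^ 2) := by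
  refine ⟨10 + 4 * 6 ^ ((p - 2) / 2), by positivity, fun μ _ _ A B C _ => ?_⟩
  simpa only [weightedSqDist, mul_add] using
    weightedSqDist_le_mul_add (μ := μ) (by linarith : -1 ≤ (p - 2) / 2) A B C

/-- Let `1 < p < ∞` and `k ≥ 1`. There is a constant `c = c(k, p) > 0` such that
for all `μ ∈ [0,1]` and all `A, B, C ∈ ℝ^k`, not all of `μ, A, B, C` zero, one has
`(μ² + |A|² + |C|²)^{(p−2)/2} |A − C|² ≤ c (μ² + |A|² + |B|²)^{(p−2)/2} |A − B|²
  + c (μ² + |B|² + |C|²)^{(p−2)/2} |B − C|²`. -/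
theorem rpow_estimate_V_ii (k : ℕ) (hk : 1 ≤ k) (p : ℝ) (hp : 1 < p) :
    ∃ c : ℝ, 0 < c ∧ ∀ μ : ℝ, 0 ≤ μ → μ ≤ 1 →
      ∀ A B C : EuclideanSpace ℝ (Fin k), ¬(μ = 0 ∧ A = 0 ∧ B = 0 ∧ C = 0) →
        (μ ^ 2 + ‖A‖ ^ 2 + ‖C‖ ^ 2) ^ ((p - 2) / 2) * ‖A - C‖ ^ 2
          ≤ c * ((μ ^ 2 + ‖A‖ ^ 2 + ‖B‖ ^ 2) ^ ((p - 2) / 2) * ‖A - B‖ ^ 2)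
            + c * ((μ ^ 2 + ‖B‖ ^ 2 + ‖C‖ ^ 2) ^ ((p - 2) / 2) * ‖B - C‖ ^ 2) :=
  rpow_estimate_V_ii_general k p hp
end

section
/- Let k ≥ 1 be an integer, 1 < p < ∞, μ ∈ [0,1] and 0 < ν ≤ L. There exists a constant c = c(k, p) ≥ 1 such that the following holds: whenever b : ℝ^k → ℝ^k is continuous on ℝ^k and differentiable at every ξ ≠ 0 (at every ξ ∈ ℝ^k if μ > 0), with derivative Db satisfying the growth bound |Db(ξ)| ≤ L (μ² + |ξ|²)^{(p−2)/2} and the ellipticity bound ⟨Db(ξ)ζ, ζ⟩ ≥ ν (μ² + |ξ|²)^{(p−2)/2} |ζ|² for all such ξ and all ζ ∈ ℝ^k, then for all ξ, ξ₀ ∈ ℝ^k (not both zero when μ = 0) one has the monotonicity inequality ⟨b(ξ) − b(ξ₀), ξ − ξ₀⟩ ≥ (ν/c) (μ² + |ξ|² + |ξ₀|²)^{(p−2)/2} |ξ − ξ₀|². -/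
/-! Restrict `b` to the segment `t ↦ ξ₀ + t • (ξ - ξ₀)` and integrate the ellipticity bound along
it; the segment meets the origin at most once, which the mean value inequality tolerates. The
integrand is nonnegative everywhere, and once `‖ξ₀‖ ≤ ‖ξ‖` the points of the last quarter of the
segment have norm at least `‖ξ‖ / 2`, so there the weight `μ² + ‖ξ₀ + t • (ξ - ξ₀)‖²` lies between
`X / 8` and `X`, with `X = μ² + ‖ξ‖² + ‖ξ₀‖²`. Hence `c = 4 · 8 ^ |(p - 2) / 2|` works. -/

open Set

theorem mul_sub_le_sub_of_le_hasDerivAt {f f' : ℝ → ℝ} {a b C : ℝ} (hab : a ≤ b)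
    (hf : ContinuousOn f (Icc a b)) (hf' : ∀ t ∈ Ioo a b, HasDerivAt f (f' t) t)
    (hC : ∀ t ∈ Ioo a b, C ≤ f' t) : C * (b - a) ≤ f b - f a := by
  refine (convex_Icc a b).mul_sub_le_image_sub_of_le_deriv hf ?_ ?_ a (left_mem_Icc.2 hab) b
    (right_mem_Icc.2 hab) hab
  · rw [interior_Icc]
    exact fun t ht => (hf' t ht).differentiableAt.differentiableWithinAt
  · rw [interior_Icc]
    exact fun t ht => (hf' t ht).deriv ▸ hC t ht

theorem mul_sub_le_sub_of_le_hasDerivAt_off_subsingleton {f f' : ℝ → ℝ} {a b C : ℝ}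
    {S : Set ℝ} (hS : S.Subsingleton) (hab : a ≤ b) (hf : ContinuousOn f (Icc a b))
    (hf' : ∀ t ∈ Ioo a b \ S, HasDerivAt f (f' t) t) (hC : ∀ t ∈ Ioo a b \ S, C ≤ f' t) :
    C * (b - a) ≤ f b - f a := by
  rcases hS.eq_empty_or_singleton with rfl | ⟨t₀, rfl⟩
  · simp only [sdiff_empty] at hf' hC
    exact mul_sub_le_sub_of_le_hasDerivAt hab hf hf' hC
  by_cases ht₀ : t₀ ∈ Ioo a b
  · have hleft : C * (t₀ - a) ≤ f t₀ - f a :=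
      mul_sub_le_sub_of_le_hasDerivAt ht₀.1.le (hf.mono (Icc_subset_Icc le_rfl ht₀.2.le))
        (fun t ht => hf' t ⟨⟨ht.1, ht.2.trans ht₀.2⟩, ht.2.ne⟩)
        (fun t ht => hC t ⟨⟨ht.1, ht.2.trans ht₀.2⟩, ht.2.ne⟩)
    have hright : C * (b - t₀) ≤ f b - f t₀ :=
      mul_sub_le_sub_of_le_hasDerivAt ht₀.2.le (hf.mono (Icc_subset_Icc ht₀.1.le le_rfl))
        (fun t ht => hf' t ⟨⟨ht₀.1.trans ht.1, ht.2⟩, ht.1.ne'⟩)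
        (fun t ht => hC t ⟨⟨ht₀.1.trans ht.1, ht.2⟩, ht.1.ne'⟩)
    linarith
  · have hS : Ioo a b \ {t₀} = Ioo a b := sdiff_singleton_eq_self ht₀
    rw [hS] at hf' hC
    exact mul_sub_le_sub_of_le_hasDerivAt hab hf hf' hC

theorem rpow_le_rpow_abs_mul_rpow {a X Y : ℝ} (s : ℝ) (ha : 1 ≤ a) (hX : 0 < X)
    (hY : X / a ≤ Y) (hYX : Y ≤ X) : X ^ s ≤ a ^ |s| * Y ^ s := by
  have ha₀ : 0 < a := by linarith
  have hY₀ : 0 < Y := (div_pos hX ha₀).trans_le hY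
  rcases le_total 0 s with hs | hs
  · calc X ^ s = a ^ s * (X / a) ^ s := by
          rw [← Real.mul_rpow ha₀.le (div_pos hX ha₀).le, mul_div_cancel₀ X ha₀.ne']
      _ ≤ a ^ |s| * Y ^ s := by
          rw [abs_of_nonneg hs]
          gcongr
  · calc X ^ s ≤ Y ^ s := Real.rpow_le_rpow_of_nonpos hY₀ hYX hs
      _ ≤ a ^ |s| * Y ^ s :=
          le_mul_of_one_le_left (by positivity) (Real.one_le_rpow ha (abs_nonneg s))

theorem subsingleton_setOf_add_smul_eq {E : Type*} [AddCommGroup E] [Module ℝ E] (x : E) {d : E}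
    (hd : d ≠ 0) (y : E) :
    {t : ℝ | x + t • d = y}.Subsingleton := by
  intro t ht t' ht'
  exact smul_left_injective ℝ hd (add_left_cancel (ht.trans ht'.symm))

section NormedSpace

variable {E : Type*} [NormedAddCommGroup E] [NormedSpace ℝ E]

theorem norm_add_smul_sub_le {x y : E} (hxy : ‖x‖ ≤ ‖y‖) {t : ℝ} (ht : t ∈ Icc 0 1) :
    ‖x + t • (y - x)‖ ≤ ‖y‖ := by
  simpa using (convex_closedBall (0 : E) ‖y‖).add_smul_sub_mem
    (mem_closedBall_zero_iff.2 hxy) (mem_closedBall_zero_iff.2 le_rfl) ht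

theorem half_norm_le_norm_add_smul_sub {x y : E} (hxy : ‖x‖ ≤ ‖y‖) {t : ℝ}
    (ht : t ∈ Icc (3 / 4) 1) :
    ‖y‖ / 2 ≤ ‖x + t • (y - x)‖ := by
  have hrepr : x + t • (y - x) = y - (1 - t) • (y - x) := by module
  have hdist : ‖(1 - t) • (y - x)‖ ≤ ‖y‖ / 2 := by
    rw [norm_smul, Real.norm_of_nonneg (by linarith [ht.2])]
    nlinarith [norm_sub_le y x, norm_nonneg (y - x), ht.1]
  rw [hrepr]
  linarith [norm_sub_norm_le y ((1 - t) • (y - x))]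

end NormedSpace

section InnerProductSpace

variable {E : Type*} [NormedAddCommGroup E] [InnerProductSpace ℝ E]

theorem mul_sub_le_inner_sub_of_le_inner_fderiv {b : E → E} {Db : E → E →L[ℝ] E} {x d : E}
    {S : Set ℝ} {t₁ t₂ C : ℝ} (hb : Continuous b) (hS : S.Subsingleton) (ht : t₁ ≤ t₂)
    (hDb : ∀ t ∈ Ioo t₁ t₂ \ S, HasFDerivAt b (Db (x + t • d)) (x + t • d))
    (hC : ∀ t ∈ Ioo t₁ t₂ \ S, C ≤ inner ℝ (Db (x + t • d) d) d) :
    C * (t₂ - t₁) ≤ inner ℝ (b (x + t₂ • d) - b (x + t₁ • d)) d := by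
  rw [inner_sub_left]
  refine mul_sub_le_sub_of_le_hasDerivAt_off_subsingleton
    (f := fun t => inner ℝ (b (x + t • d)) d) hS ht ?_ (fun t ht => ?_) hC
  · fun_prop
  · have hline : HasDerivAt (fun t : ℝ => x + t • d) d t := by
      simpa using ((hasDerivAt_id t).smul_const d).const_add x
    simpa using ((hDb t ht).comp_hasDerivAt t hline).inner ℝ (hasDerivAt_const t d)

theorem inner_sub_ge_of_norm_le {b : E → E} {Db : E → E →L[ℝ] E} {μ ν s : ℝ} (hν : 0 ≤ ν)
    (hb : Continuous b) (hDb : ∀ ξ : E, (ξ ≠ 0 ∨ 0 < μ) → HasFDerivAt b (Db ξ) ξ)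
    (hell : ∀ ξ : E, (ξ ≠ 0 ∨ 0 < μ) → ∀ ζ : E,
      ν * (μ ^ 2 + ‖ξ‖ ^ 2) ^ s * ‖ζ‖ ^ 2 ≤ inner ℝ (Db ξ ζ) ζ)
    {ξ ξ₀ : E} (hord : ‖ξ₀‖ ≤ ‖ξ‖) (hX : 0 < μ ^ 2 + ‖ξ‖ ^ 2 + ‖ξ₀‖ ^ 2) :
    ν / (4 * 8 ^ |s|) * (μ ^ 2 + ‖ξ‖ ^ 2 + ‖ξ₀‖ ^ 2) ^ s * ‖ξ - ξ₀‖ ^ 2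
      ≤ inner ℝ (b ξ - b ξ₀) (ξ - ξ₀) := by
  set X := μ ^ 2 + ‖ξ‖ ^ 2 + ‖ξ₀‖ ^ 2
  set d := ξ - ξ₀ with hd_def
  rcases eq_or_ne d 0 with hd | hd
  · simp [hd]
  have hS := subsingleton_setOf_add_smul_eq ξ₀ hd 0
  have hfirst : 0 * (3 / 4 - 0) ≤ inner ℝ (b (ξ₀ + (3 / 4 : ℝ) • d) - b (ξ₀ + (0 : ℝ) • d)) d :=
    mul_sub_le_inner_sub_of_le_inner_fderiv hb hS (by norm_num)
      (fun t ht => hDb _ (Or.inl ht.2))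
      (fun t ht => le_trans (by positivity) (hell _ (Or.inl ht.2) d))
  have hlast : ν * (X ^ s / 8 ^ |s|) * ‖d‖ ^ 2 * (1 - 3 / 4)
      ≤ inner ℝ (b (ξ₀ + (1 : ℝ) • d) - b (ξ₀ + (3 / 4 : ℝ) • d)) d := by
    refine mul_sub_le_inner_sub_of_le_inner_fderiv hb hS (by norm_num)
      (fun t ht => hDb _ (Or.inl ht.2)) fun t ht => (le_trans ?_ (hell _ (Or.inl ht.2) d))
    have ht' : t ∈ Icc (3 / 4 : ℝ) 1 := Ioo_subset_Icc_self ht.1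
    have hup := norm_add_smul_sub_le hord ⟨by linarith [ht'.1], ht'.2⟩
    have hlo := half_norm_le_norm_add_smul_sub hord ht'
    have hweight : X ^ s ≤ 8 ^ |s| * (μ ^ 2 + ‖ξ₀ + t • d‖ ^ 2) ^ s := by
      refine rpow_le_rpow_abs_mul_rpow s (by norm_num) hX ?_ ?_
      · nlinarith [norm_nonneg ξ₀, norm_nonneg ξ, sq_nonneg μ]
      · nlinarith [norm_nonneg (ξ₀ + t • d), norm_nonneg ξ₀]
    gcongr
    rwa [div_le_iff₀' (by positivity)]
  have hsplit : inner ℝ (b ξ - b ξ₀) d = inner ℝ (b ξ - b (ξ₀ + (3 / 4 : ℝ) • d)) d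
      + inner ℝ (b (ξ₀ + (3 / 4 : ℝ) • d) - b ξ₀) d := by
    rw [← inner_add_left, sub_add_sub_cancel]
  simp only [zero_smul, add_zero, one_smul, hd_def, add_sub_cancel] at hfirst hlast
  calc ν / (4 * 8 ^ |s|) * X ^ s * ‖d‖ ^ 2 = ν * (X ^ s / 8 ^ |s|) * ‖d‖ ^ 2 * (1 - 3 / 4) := by
        ring
    _ ≤ inner ℝ (b ξ - b ξ₀) d := by linarith

theorem inner_sub_ge_of_elliptic {b : E → E} {Db : E → E →L[ℝ] E} {μ ν s : ℝ} (hν : 0 ≤ ν)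
    (hb : Continuous b) (hDb : ∀ ξ : E, (ξ ≠ 0 ∨ 0 < μ) → HasFDerivAt b (Db ξ) ξ)
    (hell : ∀ ξ : E, (ξ ≠ 0 ∨ 0 < μ) → ∀ ζ : E,
      ν * (μ ^ 2 + ‖ξ‖ ^ 2) ^ s * ‖ζ‖ ^ 2 ≤ inner ℝ (Db ξ ζ) ζ)
    {ξ ξ₀ : E} (hX : 0 < μ ^ 2 + ‖ξ‖ ^ 2 + ‖ξ₀‖ ^ 2) :
    ν / (4 * 8 ^ |s|) * (μ ^ 2 + ‖ξ‖ ^ 2 + ‖ξ₀‖ ^ 2) ^ s * ‖ξ - ξ₀‖ ^ 2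
      ≤ inner ℝ (b ξ - b ξ₀) (ξ - ξ₀) := by
  wlog hord : ‖ξ₀‖ ≤ ‖ξ‖ generalizing ξ ξ₀
  · have h := this (by linarith) (le_of_not_ge hord)
    rwa [add_right_comm, norm_sub_rev, ← neg_sub ξ, ← neg_sub (b ξ), inner_neg_neg] at h
  exact inner_sub_ge_of_norm_le hν hb hDb hell hord hX

end InnerProductSpace

theorem monotonicity_of_elliptic_vector_field_general (k : ℕ) (p : ℝ) :
    ∃ c : ℝ, 1 ≤ c ∧ ∀ μ ν L : ℝ, 0 ≤ μ → μ ≤ 1 → 0 < ν → ν ≤ L →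
      ∀ (b : EuclideanSpace ℝ (Fin k) → EuclideanSpace ℝ (Fin k))
        (Db : EuclideanSpace ℝ (Fin k) →
          (EuclideanSpace ℝ (Fin k) →L[ℝ] EuclideanSpace ℝ (Fin k))),
        Continuous b →
        (∀ ξ : EuclideanSpace ℝ (Fin k), (ξ ≠ 0 ∨ 0 < μ) → HasFDerivAt b (Db ξ) ξ) →
        (∀ ξ : EuclideanSpace ℝ (Fin k), (ξ ≠ 0 ∨ 0 < μ) →
          ‖Db ξ‖ ≤ L * (μ ^ 2 + ‖ξ‖ ^ 2) ^ ((p - 2) / 2)) →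
        (∀ ξ : EuclideanSpace ℝ (Fin k), (ξ ≠ 0 ∨ 0 < μ) →
          ∀ ζ : EuclideanSpace ℝ (Fin k),
            ν * (μ ^ 2 + ‖ξ‖ ^ 2) ^ ((p - 2) / 2) * ‖ζ‖ ^ 2 ≤ (inner ℝ (Db ξ ζ) ζ : ℝ)) →
        ∀ ξ ξ₀ : EuclideanSpace ℝ (Fin k), ¬(μ = 0 ∧ ξ = 0 ∧ ξ₀ = 0) →
          (ν / c) * (μ ^ 2 + ‖ξ‖ ^ 2 + ‖ξ₀‖ ^ 2) ^ ((p - 2) / 2) * ‖ξ - ξ₀‖ ^ 2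
            ≤ (inner ℝ (b ξ - b ξ₀) (ξ - ξ₀) : ℝ) := by
  refine ⟨4 * 8 ^ |(p - 2) / 2|, ?_, ?_⟩
  · linarith [Real.one_le_rpow (by norm_num : (1 : ℝ) ≤ 8) (abs_nonneg ((p - 2) / 2))]
  intro μ ν L hμ _ hν _ b Db hb hDb _ hell ξ ξ₀ hnz
  refine inner_sub_ge_of_elliptic hν.le hb hDb hell ?_
  contrapose! hnz
  have h := le_antisymm hnz (by positivity)
  rw [add_eq_zero_iff_of_nonneg (by positivity) (by positivity),
    add_eq_zero_iff_of_nonneg (by positivity) (by positivity)] at h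
  simp_all

/-- Monotonicity of elliptic vector fields: there is `c = c(k, p) ≥ 1` such that
any vector field `b : ℝ^k → ℝ^k`, continuous and differentiable away from the origin (everywhere
if `μ > 0`), whose derivative satisfies the growth and ellipticity bounds with constants
`0 < ν ≤ L`, satisfies the monotonicity inequality
`⟨b(ξ) − b(ξ₀), ξ − ξ₀⟩ ≥ (ν/c) (μ² + |ξ|² + |ξ₀|²)^{(p−2)/2} |ξ − ξ₀|²`. -/
theorem monotonicity_of_elliptic_vector_field (k : ℕ) (hk : 1 ≤ k) (p : ℝ) (hp : 1 < p) :
    ∃ c : ℝ, 1 ≤ c ∧ ∀ μ ν L : ℝ, 0 ≤ μ → μ ≤ 1 → 0 < ν → ν ≤ L →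
      ∀ (b : EuclideanSpace ℝ (Fin k) → EuclideanSpace ℝ (Fin k))
        (Db : EuclideanSpace ℝ (Fin k) →
          (EuclideanSpace ℝ (Fin k) →L[ℝ] EuclideanSpace ℝ (Fin k))),
        Continuous b →
        (∀ ξ : EuclideanSpace ℝ (Fin k), (ξ ≠ 0 ∨ 0 < μ) → HasFDerivAt b (Db ξ) ξ) →
        (∀ ξ : EuclideanSpace ℝ (Fin k), (ξ ≠ 0 ∨ 0 < μ) →
          ‖Db ξ‖ ≤ L * (μ ^ 2 + ‖ξ‖ ^ 2) ^ ((p - 2) / 2)) →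
        (∀ ξ : EuclideanSpace ℝ (Fin k), (ξ ≠ 0 ∨ 0 < μ) →
          ∀ ζ : EuclideanSpace ℝ (Fin k),
            ν * (μ ^ 2 + ‖ξ‖ ^ 2) ^ ((p - 2) / 2) * ‖ζ‖ ^ 2 ≤ (inner ℝ (Db ξ ζ) ζ : ℝ)) →
        ∀ ξ ξ₀ : EuclideanSpace ℝ (Fin k), ¬(μ = 0 ∧ ξ = 0 ∧ ξ₀ = 0) →
          (ν / c) * (μ ^ 2 + ‖ξ‖ ^ 2 + ‖ξ₀‖ ^ 2) ^ ((p - 2) / 2) * ‖ξ - ξ₀‖ ^ 2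
            ≤ (inner ℝ (b ξ - b ξ₀) (ξ - ξ₀) : ℝ) :=
  monotonicity_of_elliptic_vector_field_general k p
end

section
/- Let (X, μ) be a measure space, let h : X → [0, ∞] be measurable, and let 0 < p < q, c > 0 and λ₁ > 0. Then ∫_{λ₁}^{∞} λ^{q−p−1} ( ∫_{{x : h(x) > λ^p/c}} h dμ ) dλ ≤ (c^{(q−p)/p}/(q − p)) ∫_X h^{q/p} dμ. -/
/-!
With the weighted measure `ρ = h μ`, the inner integral is `ρ {l < f}` for
`f = (c h)^{1/p}` wherever `h` is finite, so the integral over `(0, ∞)` is, by the layer cake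
formula, `(q - p)⁻¹ ∫ f^{q-p} dρ = c^{(q-p)/p} / (q - p) · ∫ h^{q/p} dμ`; restricting to
`(λ₁, ∞)` only decreases it. If `h = ∞` on a set of positive measure, the right-hand side is `∞`.
-/

open MeasureTheory Set
open scoped ENNReal

namespace ENNReal

lemma ofReal_rpow_div_lt_iff {p c t : ℝ} {a : ℝ≥0∞} (hp : 0 < p) (hc : 0 < c) (ht : 0 ≤ t)
    (ha : a ≠ ∞) : ENNReal.ofReal (t ^ p / c) < a ↔ t < (c * a.toReal) ^ p⁻¹ := by
  rw [ofReal_lt_iff_lt_toReal (by positivity) ha, div_lt_iff₀' hc,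
    Real.lt_rpow_inv_iff_of_pos ht (by positivity) hp]

lemma ofReal_rpow_inv_rpow {p c r : ℝ} {a : ℝ≥0∞} (hp : 0 < p) (hc : 0 < c) (hr : 0 ≤ r)
    (ha : a ≠ ∞) :
    ENNReal.ofReal (((c * a.toReal) ^ p⁻¹) ^ r) = ENNReal.ofReal (c ^ (r / p)) * a ^ (r / p) := by
  rw [← Real.rpow_mul (by positivity), inv_mul_eq_div, Real.mul_rpow hc.le toReal_nonneg,
    ofReal_mul (by positivity), ← ofReal_rpow_of_nonneg toReal_nonneg (by positivity),
    ofReal_toReal ha]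

end ENNReal

section LayerCake

variable {α : Type*} [MeasurableSpace α]

theorem lintegral_Ioi_meas_lt_mul_rpow_eq (μ : Measure α) {f : α → ℝ} (f_nn : 0 ≤ᵐ[μ] f)
    (f_mble : AEMeasurable f μ) {r : ℝ} (hr : 0 < r) :
    ∫⁻ t in Ioi 0, μ {a | t < f a} * ENNReal.ofReal (t ^ (r - 1)) =
      ENNReal.ofReal r⁻¹ * ∫⁻ a, ENNReal.ofReal (f a ^ r) ∂μ := by
  rw [lintegral_rpow_eq_lintegral_meas_lt_mul μ f_nn f_mble hr, ← mul_assoc,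
    ← ENNReal.ofReal_mul (by positivity), inv_mul_cancel₀ hr.ne', ENNReal.ofReal_one, one_mul]

theorem setLIntegral_superlevel_eq_withDensity {μ : Measure α} {h : α → ℝ≥0∞} (hh : Measurable h)
    (h_fin : ∀ᵐ x ∂μ, h x ≠ ∞) {p c t : ℝ} (hp : 0 < p) (hc : 0 < c) (ht : 0 ≤ t) :
    ∫⁻ x in {x | ENNReal.ofReal (t ^ p / c) < h x}, h x ∂μ =
      μ.withDensity h {x | t < (c * (h x).toReal) ^ p⁻¹} := by
  rw [← withDensity_apply _ (measurableSet_lt measurable_const hh)]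
  refine measure_congr ?_
  filter_upwards [(withDensity_absolutelyContinuous μ h).ae_le h_fin] with x hx
  exact propext (ENNReal.ofReal_rpow_div_lt_iff hp hc ht hx)

theorem lintegral_Ioi_rpow_mul_setLIntegral_superlevel_eq {μ : Measure α} {h : α → ℝ≥0∞}
    (hh : Measurable h) (h_fin : ∀ᵐ x ∂μ, h x ≠ ∞) {p q c : ℝ} (hp : 0 < p) (hpq : p < q)
    (hc : 0 < c) :
    ∫⁻ l in Ioi 0, ENNReal.ofReal (l ^ (q - p - 1)) *
        ∫⁻ x in {x | ENNReal.ofReal (l ^ p / c) < h x}, h x ∂μ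
      = ENNReal.ofReal (c ^ ((q - p) / p) / (q - p)) * ∫⁻ x, h x ^ (q / p) ∂μ := by
  have hr : 0 < q - p := sub_pos.mpr hpq
  set f : α → ℝ := fun x ↦ (c * (h x).toReal) ^ p⁻¹
  have f_mble : Measurable f := by fun_prop
  have hρ_fin : ∀ᵐ x ∂μ.withDensity h, h x ≠ ∞ :=
    (withDensity_absolutelyContinuous μ h).ae_le h_fin
  have h_rpow : ∀ x, h x * h x ^ ((q - p) / p) = h x ^ (q / p) := fun x ↦ by
    rw [show q / p = 1 + (q - p) / p by field_simp; ring,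
      ENNReal.rpow_add_of_nonneg _ _ zero_le_one (by positivity), ENNReal.rpow_one]
  calc ∫⁻ l in Ioi 0, ENNReal.ofReal (l ^ (q - p - 1)) *
          ∫⁻ x in {x | ENNReal.ofReal (l ^ p / c) < h x}, h x ∂μ
      = ∫⁻ l in Ioi 0, μ.withDensity h {x | l < f x} * ENNReal.ofReal (l ^ (q - p - 1)) := by
        refine setLIntegral_congr_fun measurableSet_Ioi fun l hl ↦ ?_
        rw [setLIntegral_superlevel_eq_withDensity hh h_fin hp hc (le_of_lt hl), mul_comm]
    _ = ENNReal.ofReal (q - p)⁻¹ * ∫⁻ x, ENNReal.ofReal (f x ^ (q - p)) ∂μ.withDensity h :=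
        lintegral_Ioi_meas_lt_mul_rpow_eq _ (ae_of_all _ fun x ↦ by positivity)
          f_mble.aemeasurable hr
    _ = ENNReal.ofReal (q - p)⁻¹ *
          (ENNReal.ofReal (c ^ ((q - p) / p)) * ∫⁻ x, h x ^ ((q - p) / p) ∂μ.withDensity h) := by
        congr 1
        rw [← lintegral_const_mul' _ _ ENNReal.ofReal_ne_top]
        refine lintegral_congr_ae ?_
        filter_upwards [hρ_fin] with x hx
        exact ENNReal.ofReal_rpow_inv_rpow hp hc hr.le hx
    _ = _ := by
        rw [lintegral_withDensity_eq_lintegral_mul _ hh (by fun_prop), ← mul_assoc,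
          ← ENNReal.ofReal_mul (by positivity), inv_mul_eq_div]
        simp only [Pi.mul_apply, h_rpow]

end LayerCake

/-- For measurable `h : X → [0,∞]`, `0 < p < q`, `c > 0` and `λ₁ > 0`,
`∫_{λ₁}^∞ λ^{q−p−1} ∫_{{h > λ^p/c}} h dμ dλ ≤ (c^{(q−p)/p}/(q − p)) ∫_X h^{q/p} dμ`. -/
theorem layer_cake_estimate_inhomogeneity (X : Type*) [MeasurableSpace X] (μ : Measure X)
    (h : X → ℝ≥0∞) (hh : Measurable h)
    (p q c lam₁ : ℝ) (hp : 0 < p) (hpq : p < q) (hc : 0 < c) (hlam₁ : 0 < lam₁) :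
    (∫⁻ l in Set.Ioi lam₁, ENNReal.ofReal (l ^ (q - p - 1)) *
        ∫⁻ x in {x | ENNReal.ofReal (l ^ p / c) < h x}, h x ∂μ)
      ≤ ENNReal.ofReal (c ^ ((q - p) / p) / (q - p)) * ∫⁻ x, h x ^ (q / p) ∂μ := by
  by_cases h_fin : ∀ᵐ x ∂μ, h x ≠ ∞
  · rw [← lintegral_Ioi_rpow_mul_setLIntegral_superlevel_eq hh h_fin hp hpq hc]
    exact lintegral_mono_set (Ioi_subset_Ioi hlam₁.le)
  · have h_top : ∫⁻ x, h x ^ (q / p) ∂μ = ∞ := by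
      refine lintegral_eq_top_of_measure_eq_top_ne_zero (by fun_prop) ?_
      simpa [ENNReal.rpow_eq_top_iff_of_pos (div_pos (hp.trans hpq) hp), ae_iff] using h_fin
    rw [h_top, ENNReal.mul_top (ENNReal.ofReal_pos.mpr (by positivity)).ne']
    exact le_top
end
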